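/- arXiv:2312.04993 — 8 statements merged into one kernel-verified Lean document; each statement's English description precedes it below -/
import Mathlib

section
/- For a countable group G, the set LO(G) of positive cones of G, viewed as a subset of the product space {0,1}^G (i.e., of Set G with the product topology where {0,1} is discrete), is a closed subset; in particular LO(G) is a compact topological space. -/
/-- `P` is a positive cone of `G`: closed under multiplication, and `G \ {1}` is the
disjoint union of `P` and `P⁻¹`. -/
def IsPositiveCone {G : Type*} [Group G] (P : Set G) : Prop :=
  (∀ a ∈ P, ∀ b ∈ P, a * b ∈ P) ∧ (P ∪ P⁻¹ = {(1 : G)}ᶜ) ∧ Disjoint P P⁻¹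

/-- The space `LO(G)` of positive cones of `G`, as a subset of `{0,1}^G = G → Bool`
(with the product topology, `Bool` discrete). -/
def LO (G : Type*) [Group G] : Set (G → Bool) :=
  {f | IsPositiveCone {g : G | f g = true}}

/-! Each axiom of a positive cone constrains at most three coordinates at a time, so `LO G` is an
intersection of sets that are closed in the product topology; compactness is then Tychonoff. -/

theorem isClosed_setOf_apply₃ {ι X : Type*} [TopologicalSpace X] [DiscreteTopology X]
    (a b c : ι) (p : X → X → X → Prop) : IsClosed {f : ι → X | p (f a) (f b) (f c)} :=
  IsClosed.preimage (f := fun f : ι → X ↦ (f a, f b, f c))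
    (t := {x | p x.1 x.2.1 x.2.2}) (by fun_prop) (isClosed_discrete _)

theorem LO_eq_iInter (G : Type*) [Group G] :
    LO G = (⋂ (a : G) (b : G), {f | f a = true → f b = true → f (a * b) = true}) ∩
      (⋂ g : G, {f | (f g = true ∨ f g⁻¹ = true) ↔ g ≠ 1}) ∩
      ⋂ g : G, {f | ¬(f g = true ∧ f g⁻¹ = true)} := by
  ext f
  simp [LO, IsPositiveCone, Set.ext_iff, Set.disjoint_left, and_assoc, imp_forall_iff]

theorem isClosed_LO (G : Type*) [Group G] : IsClosed (LO G) := by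
  rw [LO_eq_iInter]
  refine .inter (.inter ?_ ?_) ?_
  · exact isClosed_iInter fun a ↦ isClosed_iInter fun b ↦
      isClosed_setOf_apply₃ a b (a * b) fun x y z ↦ x = true → y = true → z = true
  · exact isClosed_iInter fun g ↦
      isClosed_setOf_apply₃ g g⁻¹ g fun x y _ ↦ (x = true ∨ y = true) ↔ g ≠ 1
  · exact isClosed_iInter fun g ↦
      isClosed_setOf_apply₃ g g⁻¹ g fun x y _ ↦ ¬(x = true ∧ y = true)

theorem LO_isClosed_isCompact_general (G : Type*) [Group G] :
    IsClosed (LO G) ∧ IsCompact (LO G) :=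
  ⟨isClosed_LO G, (isClosed_LO G).isCompact⟩

/-- For a countable group `G`, the set of positive cones is a closed subset
of `{0,1}^G`; in particular it is compact. -/
theorem LO_isClosed_isCompact (G : Type*) [Group G] [Countable G] :
    IsClosed (LO G) ∧ IsCompact (LO G) :=
  LO_isClosed_isCompact_general G
end

section
/- Let G be a group with positive cone P and let C ≤ G be a subgroup that is convex with respect to the order induced by P (i.e., g, h ∈ C and g⁻¹f ∈ P and f⁻¹h ∈ P imply f ∈ C). If c ∈ C and g₁, …, gₙ ∈ G \ C all belong to P, then g₁, …, gₙ all belong to cPc⁻¹. -/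
section ConvexSubgroup

variable {G : Type*} [Group G] {P : Set G}

theorem IsPositiveCone.mem_or_inv_mem (hP : IsPositiveCone P) {x : G} (hx : x ≠ 1) :
    x ∈ P ∨ x⁻¹ ∈ P :=
  show x ∈ P ∪ P⁻¹ from hP.2.1 ▸ hx

def IsConvexSubgroup (P : Set G) (C : Subgroup G) : Prop :=
  ∀ g h f : G, g ∈ C → h ∈ C → g⁻¹ * f ∈ P → f⁻¹ * h ∈ P → f ∈ C

variable {C : Subgroup G} {c g : G}

theorem IsConvexSubgroup.inv_mul_mem_of_notMem (hP : IsPositiveCone P)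
    (hC : IsConvexSubgroup P C) (hc : c ∈ C) (hgC : g ∉ C) (hgP : g ∈ P) : c⁻¹ * g ∈ P := by
  have hgc : g⁻¹ * c ≠ 1 := fun h => hgC (inv_mul_eq_one.mp h ▸ hc)
  rcases hP.mem_or_inv_mem hgc with hlt | hgt
  · exact absurd (hC 1 c g C.one_mem hc (by rwa [inv_one, one_mul]) hlt) hgC
  · rwa [mul_inv_rev, inv_inv] at hgt

theorem IsConvexSubgroup.conj_mem_of_notMem (hP : IsPositiveCone P)
    (hC : IsConvexSubgroup P C) (hc : c ∈ C) (hgC : g ∉ C) (hgP : g ∈ P) : c⁻¹ * g * c ∈ P := by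
  by_contra hconj
  have hne : c⁻¹ * g * c ≠ 1 := fun h =>
    hgC ((conj_eq_one_iff (a := c⁻¹)).mp (by rwa [inv_inv]) ▸ C.one_mem)
  have hinv : c⁻¹ * (g⁻¹ * c) ∈ P := by
    simpa [mul_assoc] using (hP.mem_or_inv_mem hne).resolve_left hconj
  have hbelow : (g⁻¹ * c)⁻¹ * 1 ∈ P := by
    simpa using hC.inv_mul_mem_of_notMem hP hc hgC hgP
  have hmem : g⁻¹ * c ∈ C := hC c 1 _ hc C.one_mem hinv hbelow
  exact hgC (by simpa using C.mul_mem hc (C.inv_mem hmem))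

end ConvexSubgroup

/-- If `C` is convex with respect to the order induced by the positive cone `P`
(`g <_P h ↔ g⁻¹h ∈ P`), `c ∈ C`, and `g₁, …, gₙ ∈ G \ C` all lie in `P`, then each `gᵢ`
lies in `cPc⁻¹` (equivalently `c⁻¹ gᵢ c ∈ P`). -/
theorem convex_claim {G : Type*} [Group G] (P : Set G) (hP : IsPositiveCone P)
    (C : Subgroup G)
    (hconv : ∀ g h f : G, g ∈ C → h ∈ C → g⁻¹ * f ∈ P → f⁻¹ * h ∈ P → f ∈ C)
    (c : G) (hc : c ∈ C) (n : ℕ) (gs : Fin n → G)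
    (hgsC : ∀ i, gs i ∉ C) (hgsP : ∀ i, gs i ∈ P) :
    ∀ i, c⁻¹ * gs i * c ∈ P :=
  fun i => IsConvexSubgroup.conj_mem_of_notMem hP hconv hc (hgsC i) (hgsP i)
end

section
/- Let G be a group, C ≤ G a subgroup, and suppose there is a linear order <' on the coset space G/C invariant under the left G-action (translation). For any positive cone Q of C, the set P̄ = {g ∈ G : C <' gC, or (g ∈ C and g ∈ Q)} is a positive cone of G, and the resulting map LO(C) → LO(G), Q ↦ P̄, is injective. -/
/-- The lexicographic extension of a positive cone `Q` of `C` along a linear order `lt'`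
on the coset space `G ⧸ C`: `g ∈ Q̄ iff C <' gC, or g ∈ C and g ∈ Q`. -/
def lexExt {G : Type*} [Group G] (C : Subgroup G)
    (lt' : G ⧸ C → G ⧸ C → Prop) (Q : Set C) : Set G :=
  {g | lt' ((1 : G) : G ⧸ C) (g : G ⧸ C) ∨ ∃ hg : g ∈ C, (⟨g, hg⟩ : C) ∈ Q}

/-!
For `g ∉ C` membership of `g` in `Q̄` only depends on the coset `gC`, and for `g ∈ C` it is
membership in `Q`. The cone axioms for `Q̄` therefore split into the coset case, where they
follow from `<'` being an invariant strict linear order (translating `C <' bC` by `a` gives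
`aC <' abC`, and translating `gC <' C` by `g⁻¹` gives `C <' g⁻¹C`), and the case inside `C`,
where they are the cone axioms of `Q`. Injectivity holds because `Q̄ ∩ C = Q`.
-/

namespace IsPositiveCone

variable {G : Type*} [Group G] {P : Set G}

theorem one_notMem (hP : IsPositiveCone P) : (1 : G) ∉ P := fun h =>
  (hP.2.1.subset (Or.inl h) : (1 : G) ∈ ({1}ᶜ : Set G)) rfl

theorem mem_or_inv_mem_s6 (hP : IsPositiveCone P) {g : G} (hg : g ≠ 1) : g ∈ P ∨ g⁻¹ ∈ P :=
  hP.2.1.symm.subset hg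

theorem inv_notMem (hP : IsPositiveCone P) {g : G} (hg : g ∈ P) : g⁻¹ ∉ P :=
  Set.disjoint_left.mp hP.2.2 hg

theorem mk' (hmul : ∀ a ∈ P, ∀ b ∈ P, a * b ∈ P) (hone : (1 : G) ∉ P)
    (htotal : ∀ g : G, g ≠ 1 → g ∈ P ∨ g⁻¹ ∈ P) (hasymm : ∀ g ∈ P, g⁻¹ ∉ P) :
    IsPositiveCone P := by
  refine ⟨hmul, Set.ext fun g => ⟨?_, htotal g⟩, Set.disjoint_left.mpr hasymm⟩
  rintro (hg | hg) rfl
  · exact hone hg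
  · exact hone (by simpa using hg)

end IsPositiveCone

section LexExt

variable {G : Type*} [Group G] {C : Subgroup G} {lt' : G ⧸ C → G ⧸ C → Prop} {Q : Set C}

theorem coset_eq_one_iff_mem {g : G} : (g : G ⧸ C) = ((1 : G) : G ⧸ C) ↔ g ∈ C := by
  rw [QuotientGroup.eq]
  simp

theorem mem_lexExt_of_notMem {g : G} (hg : g ∉ C) :
    g ∈ lexExt C lt' Q ↔ lt' ((1 : G) : G ⧸ C) (g : G ⧸ C) :=
  or_iff_left fun ⟨hgC, _⟩ => hg hgC

theorem coe_mem_lexExt (hirr : ∀ x, ¬ lt' x x) (q : C) : (q : G) ∈ lexExt C lt' Q ↔ q ∈ Q := by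
  rw [lexExt, Set.mem_ofPred_eq, coset_eq_one_iff_mem.mpr q.2]
  simp [hirr]

theorem lexExt_injective (hirr : ∀ x, ¬ lt' x x) : Function.Injective (lexExt C lt') :=
  fun Q₁ Q₂ h => Set.ext fun q => by rw [← coe_mem_lexExt hirr, ← coe_mem_lexExt hirr, h]

theorem coset_mul_lt_of_lt (hinv : ∀ (g : G) (x y : G ⧸ C), lt' x y → lt' (g • x) (g • y))
    (k : G) {a b : G} (h : lt' (a : G ⧸ C) (b : G ⧸ C)) :
    lt' ((k * a : G) : G ⧸ C) ((k * b : G) : G ⧸ C) :=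
  hinv k _ _ h

theorem mul_mem_lexExt (htrans : ∀ x y z, lt' x y → lt' y z → lt' x z)
    (hinv : ∀ (g : G) (x y : G ⧸ C), lt' x y → lt' (g • x) (g • y))
    (hQ : ∀ p ∈ Q, ∀ q ∈ Q, p * q ∈ Q) {a b : G} (ha : a ∈ lexExt C lt' Q)
    (hb : b ∈ lexExt C lt' Q) : a * b ∈ lexExt C lt' Q := by
  rcases ha with ha | ⟨haC, haQ⟩ <;> rcases hb with hb | ⟨hbC, hbQ⟩
  · exact Or.inl (htrans _ _ _ ha (by simpa using coset_mul_lt_of_lt hinv a hb))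
  · exact Or.inl (by rwa [QuotientGroup.mk_mul_of_mem a hbC])
  · exact Or.inl (by simpa [coset_eq_one_iff_mem.mpr haC] using coset_mul_lt_of_lt hinv a hb)
  · exact Or.inr ⟨C.mul_mem haC hbC, hQ _ haQ _ hbQ⟩

theorem one_notMem_lexExt (hirr : ∀ x, ¬ lt' x x) (hQ : (1 : C) ∉ Q) :
    (1 : G) ∉ lexExt C lt' Q := by
  simpa using (coe_mem_lexExt hirr (1 : C)).not.mpr hQ

theorem mem_or_inv_mem_lexExt (htotal : ∀ x y, x ≠ y → lt' x y ∨ lt' y x)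
    (hinv : ∀ (g : G) (x y : G ⧸ C), lt' x y → lt' (g • x) (g • y))
    (hQ : ∀ q : C, q ≠ 1 → q ∈ Q ∨ q⁻¹ ∈ Q) {g : G} (hg : g ≠ 1) :
    g ∈ lexExt C lt' Q ∨ g⁻¹ ∈ lexExt C lt' Q := by
  by_cases hgC : g ∈ C
  · rcases hQ ⟨g, hgC⟩ (by simpa using hg) with h | h
    · exact Or.inl (Or.inr ⟨hgC, h⟩)
    · exact Or.inr (Or.inr ⟨C.inv_mem hgC, h⟩)
  · rcases htotal _ _ (mt coset_eq_one_iff_mem.mp hgC) with h | h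
    · exact Or.inr (Or.inl (by simpa using coset_mul_lt_of_lt hinv g⁻¹ h))
    · exact Or.inl (Or.inl h)

theorem inv_notMem_lexExt (hirr : ∀ x, ¬ lt' x x)
    (htrans : ∀ x y z, lt' x y → lt' y z → lt' x z)
    (hinv : ∀ (g : G) (x y : G ⧸ C), lt' x y → lt' (g • x) (g • y))
    (hQ : ∀ q ∈ Q, q⁻¹ ∉ Q) {g : G} (hg : g ∈ lexExt C lt' Q) : g⁻¹ ∉ lexExt C lt' Q := by
  by_cases hgC : g ∈ C
  · lift g to C using hgC
    rw [coe_mem_lexExt hirr] at hg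
    rw [← Subgroup.coe_inv, coe_mem_lexExt hirr]
    exact hQ g hg
  · rw [mem_lexExt_of_notMem hgC] at hg
    rw [mem_lexExt_of_notMem (mt C.inv_mem_iff.mp hgC)]
    intro hg'
    have hg_neg : lt' (g : G ⧸ C) ((1 : G) : G ⧸ C) := by
      simpa using coset_mul_lt_of_lt hinv g hg'
    exact hirr _ (htrans _ _ _ hg hg_neg)

theorem isPositiveCone_lexExt (hirr : ∀ x, ¬ lt' x x)
    (htrans : ∀ x y z, lt' x y → lt' y z → lt' x z)
    (htotal : ∀ x y, x ≠ y → lt' x y ∨ lt' y x)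
    (hinv : ∀ (g : G) (x y : G ⧸ C), lt' x y → lt' (g • x) (g • y))
    (hQ : IsPositiveCone Q) : IsPositiveCone (lexExt C lt' Q) :=
  .mk' (fun _ ha _ hb => mul_mem_lexExt htrans hinv hQ.1 ha hb)
    (one_notMem_lexExt hirr hQ.one_notMem)
    (fun _ => mem_or_inv_mem_lexExt htotal hinv fun _ => hQ.mem_or_inv_mem_s6)
    (fun _ => inv_notMem_lexExt hirr htrans hinv fun _ => hQ.inv_notMem)

end LexExt

/-- If `lt'` is a `G`-invariant strict linear order on `G ⧸ C`, then for every
positive cone `Q` of `C` the lexicographic extension `Q̄` is a positive cone of `G`, and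
the map `Q ↦ Q̄` is injective. -/
theorem lexExt_positive_cone_and_injective {G : Type*} [Group G] (C : Subgroup G)
    (lt' : G ⧸ C → G ⧸ C → Prop)
    (hirr : ∀ x, ¬ lt' x x)
    (htrans : ∀ x y z, lt' x y → lt' y z → lt' x z)
    (htotal : ∀ x y, x ≠ y → lt' x y ∨ lt' y x)
    (hinv : ∀ (g : G) (x y : G ⧸ C), lt' x y → lt' (g • x) (g • y)) :
    (∀ Q : Set C, IsPositiveCone Q → IsPositiveCone (lexExt C lt' Q)) ∧
    (∀ Q₁ Q₂ : Set C, IsPositiveCone Q₁ → IsPositiveCone Q₂ →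
      lexExt C lt' Q₁ = lexExt C lt' Q₂ → Q₁ = Q₂) :=
  ⟨fun _ => isPositiveCone_lexExt hirr htrans htotal hinv,
    fun _ _ _ _ h => lexExt_injective hirr h⟩
end

section
/- In the group H_j = ⟨x₁, …, x_j | x_i x_{i−1} x_i⁻¹ = x_{i−1}⁻¹ for 1 < i ≤ j, x_i x_k = x_k x_i for |i−k| > 1⟩, every element can be written in the form x₁^{a₁} x₂^{a₂} ⋯ x_j^{a_j} with a₁, …, a_j ∈ ℤ. -/
/-- The relator set of the group
`H_j = ⟨x₁, …, x_j ∣ x_i x_{i−1} x_i⁻¹ = x_{i−1}⁻¹ (1 < i ≤ j),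
x_i x_k = x_k x_i (|i − k| > 1)⟩`, with generators indexed by `Fin j`. -/
def HRels (j : ℕ) : Set (FreeGroup (Fin j)) :=
  {r | (∃ i k : Fin j, (i : ℕ) = (k : ℕ) + 1 ∧
          r = FreeGroup.of i * FreeGroup.of k * (FreeGroup.of i)⁻¹ * FreeGroup.of k) ∨
       (∃ i k : Fin j, ((k : ℕ) + 1 < (i : ℕ) ∨ (i : ℕ) + 1 < (k : ℕ)) ∧
          r = FreeGroup.of i * FreeGroup.of k * (FreeGroup.of i)⁻¹ * (FreeGroup.of k)⁻¹)}

/-!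
Multiplying a normal form `x₁^{a₁} ⋯ x_j^{a_j}` on the left by `x_i^{±1}`, the letter `x_i^{±1}`
moves right past `x_k^{a_k}` for every `k < i`: it commutes with it when `k < i - 1` and turns it
into `x_{i-1}^{-a_{i-1}}` when `k = i - 1`, and is then absorbed into `x_i^{a_i}`. So the normal
forms are a subset containing `1` and stable under left multiplication by the generators and their
inverses, hence they exhaust the group.
-/

namespace HGroup

variable {G : Type*} [Group G] {j : ℕ}

structure SatisfiesHRels (x : Fin j → G) : Prop where
  conj_pred : ∀ i k : Fin j, (i : ℕ) = k + 1 → x i * x k * (x i)⁻¹ = (x k)⁻¹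
  commute_of_lt_pred : ∀ i k : Fin j, (k : ℕ) + 1 < i → Commute (x i) (x k)

theorem satisfiesHRels_of :
    SatisfiesHRels (PresentedGroup.of : Fin j → PresentedGroup (HRels j)) where
  conj_pred i k h := by
    have := PresentedGroup.one_of_mem (rels := HRels j) (Or.inl ⟨i, k, h, rfl⟩)
    simp only [map_mul, map_inv] at this
    exact eq_inv_of_mul_eq_one_left this
  commute_of_lt_pred i k h := by
    have := PresentedGroup.one_of_mem (rels := HRels j) (Or.inr ⟨i, k, Or.inl h, rfl⟩)
    simp only [map_mul, map_inv] at this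
    exact mul_inv_eq_iff_eq_mul.mp (mul_inv_eq_one.mp this)

def normalForm (x : Fin j → G) (a : Fin j → ℤ) : G :=
  ((List.finRange j).map fun i => x i ^ a i).prod

def mulExponents (i : Fin j) (ε : ℤ) (a : Fin j → ℤ) (k : Fin j) : ℤ :=
  if k = i then ε + a k else if (k : ℕ) + 1 = i then -a k else a k

variable {x : Fin j → G}

theorem SatisfiesHRels.zpow_conj_pred (hx : SatisfiesHRels x) {i k : Fin j}
    (h : (i : ℕ) = k + 1) {ε : ℤ} (hε : ε = 1 ∨ ε = -1) :
    x i ^ ε * x k * (x i ^ ε)⁻¹ = (x k)⁻¹ := by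
  have hconj := hx.conj_pred i k h
  rcases hε with rfl | rfl
  · simpa using hconj
  · calc x i ^ (-1 : ℤ) * x k * (x i ^ (-1 : ℤ))⁻¹
        = (x i)⁻¹ * (x i * x k * (x i)⁻¹)⁻¹ * x i := by rw [hconj]; group
      _ = (x k)⁻¹ := by group

theorem SatisfiesHRels.zpow_mul_zpow_of_lt (hx : SatisfiesHRels x) {i k : Fin j} (hki : k < i)
    {ε : ℤ} (hε : ε = 1 ∨ ε = -1) (n : ℤ) :
    x i ^ ε * x k ^ n = x k ^ (if (k : ℕ) + 1 = i then -n else n) * x i ^ ε := by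
  split_ifs with h
  · rw [← mul_inv_eq_iff_eq_mul, ← conj_zpow, hx.zpow_conj_pred h.symm hε, inv_zpow, zpow_neg]
  · exact (hx.commute_of_lt_pred i k (by omega)).zpow_zpow ε n

theorem SatisfiesHRels.zpow_mul_prod_map_zpow (hx : SatisfiesHRels x) (i : Fin j) {ε : ℤ}
    (hε : ε = 1 ∨ ε = -1) (a : Fin j → ℤ) {l : List (Fin j)} (hl : l.Pairwise (· < ·))
    (hi : i ∈ l) :
    x i ^ ε * (l.map fun k => x k ^ a k).prod
      = (l.map fun k => x k ^ mulExponents i ε a k).prod := by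
  induction l with
  | nil => simp at hi
  | cons k t ih =>
    obtain ⟨hk_lt, ht⟩ := List.pairwise_cons.mp hl
    simp only [List.map_cons, List.prod_cons]
    rcases List.mem_cons.mp hi with rfl | hit
    · have htail : ∀ m ∈ t, mulExponents i ε a m = a m := fun m hm => by
        have := hk_lt m hm
        rw [mulExponents, if_neg this.ne', if_neg (by omega)]
      rw [List.map_congr_left fun m hm => congrArg (x m ^ ·) (htail m hm), ← mul_assoc,
        ← zpow_add, mulExponents, if_pos rfl]
    · have hki : k < i := hk_lt i hit
      rw [← mul_assoc, hx.zpow_mul_zpow_of_lt hki hε, mul_assoc, ih ht hit, mulExponents,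
        if_neg hki.ne]

theorem SatisfiesHRels.zpow_mul_normalForm (hx : SatisfiesHRels x) (i : Fin j) {ε : ℤ}
    (hε : ε = 1 ∨ ε = -1) (a : Fin j → ℤ) :
    x i ^ ε * normalForm x a = normalForm x (mulExponents i ε a) :=
  hx.zpow_mul_prod_map_zpow i hε a (List.sortedLT_finRange j).pairwise (List.mem_finRange i)

theorem SatisfiesHRels.exists_eq_normalForm (hx : SatisfiesHRels x)
    (hgen : Subgroup.closure (Set.range x) = ⊤) (g : G) : ∃ a, g = normalForm x a := by
  have hg : g ∈ Subgroup.closure (Set.range x) := hgen ▸ Subgroup.mem_top g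
  induction hg using Subgroup.closure_induction_left with
  | one => exact ⟨0, by simp [normalForm]⟩
  | mul_left _ hy _ _ ih =>
    obtain ⟨i, rfl⟩ := hy
    obtain ⟨a, rfl⟩ := ih
    exact ⟨mulExponents i 1 a, by simpa using hx.zpow_mul_normalForm i (.inl rfl) a⟩
  | inv_mul_cancel _ hy _ _ ih =>
    obtain ⟨i, rfl⟩ := hy
    obtain ⟨a, rfl⟩ := ih
    exact ⟨mulExponents i (-1) a, by simpa using hx.zpow_mul_normalForm i (.inr rfl) a⟩

end HGroup

/-- Every element of `H_j` can be written in the normal form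
`x₁^{a₁} x₂^{a₂} ⋯ x_j^{a_j}` with `a₁, …, a_j ∈ ℤ`. -/
theorem H_normal_form (j : ℕ) (g : PresentedGroup (HRels j)) :
    ∃ a : Fin j → ℤ,
      g = ((List.finRange j).map
            (fun i => (PresentedGroup.of i : PresentedGroup (HRels j)) ^ a i)).prod :=
  HGroup.satisfiesHRels_of.exists_eq_normalForm (PresentedGroup.closure_range_of _) g
end

section
/- For n ≥ 2 and any irrational α ∈ ℝ, the set P_α = {g ∈ BS(1,n) : ρ(g)(α) > α} is a positive cone of BS(1,n), where ρ is the standard affine representation ρ(a)(x) = x+1, ρ(b)(x) = nx. -/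
/-- The single relator `b a b⁻¹ a⁻ⁿ` of the Baumslag–Solitar group `BS(1,n)`, with
generators indexed by `Bool` (`false ↦ a`, `true ↦ b`). -/
def BSRels (n : ℕ) : Set (FreeGroup Bool) :=
  {FreeGroup.of true * FreeGroup.of false * (FreeGroup.of true)⁻¹ * (FreeGroup.of false ^ n)⁻¹}

/-- The Baumslag–Solitar group `BS(1,n) = ⟨a, b ∣ b a b⁻¹ = aⁿ⟩`. -/
abbrev BS (n : ℕ) := PresentedGroup (BSRels n)

/-- The generator `a` of `BS(1,n)`. -/
def BSa (n : ℕ) : BS n := PresentedGroup.of false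

/-- The generator `b` of `BS(1,n)`. -/
def BSb (n : ℕ) : BS n := PresentedGroup.of true

/-!
Every element of `BS(1,n)` can be written `b⁻ⁱ aᵐ bʲ`, on which `ρ` acts by
`x ↦ (nʲ x + m) / nⁱ`. This is an increasing map, and its only possible fixed point
`m / (nⁱ - nʲ)` is rational unless `i = j` and `m = 0`, i.e. unless the element is trivial.
For any group acting by increasing bijections of a line and freely at a point `α`,
the elements moving `α` up form a positive cone.
-/

theorem isPositiveCone_setOf_lt_apply {G X : Type*} [Group G] [LinearOrder X]
    (ρ : G →* Equiv.Perm X) (hρ : ∀ g, StrictMono (ρ g)) {x : X}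
    (hfree : ∀ g, ρ g x = x → g = 1) :
    IsPositiveCone {g : G | x < ρ g x} := by
  have lt_apply_inv_iff (g : G) : x < ρ g⁻¹ x ↔ ρ g x < x := by
    rw [← (hρ g).lt_iff_lt, ← Equiv.Perm.mul_apply, ← map_mul, mul_inv_cancel, map_one,
      Equiv.Perm.one_apply]
  refine ⟨fun g hg h hh => hg.trans ?_, ?_, ?_⟩
  · rw [map_mul, Equiv.Perm.mul_apply]
    exact hρ g hh
  · ext g
    simp only [Set.mem_union, Set.mem_ofPred_eq, Set.mem_inv, lt_apply_inv_iff,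
      Set.mem_compl_singleton_iff, ← ne_iff_lt_or_gt]
    exact ⟨fun h hg => h (by rw [hg, map_one, Equiv.Perm.one_apply]),
      fun hg h => hg (hfree g h.symm)⟩
  · refine Set.disjoint_left.mpr fun g hg hg' => ?_
    rw [Set.mem_inv, Set.mem_ofPred_eq, lt_apply_inv_iff] at hg'
    exact lt_asymm hg hg'

theorem Equiv.Perm.zpow_apply_of_forall_apply_eq_add {G : Type*} [AddCommGroup G]
    {f : Equiv.Perm G} {c : G} (hf : ∀ x, f x = x + c) (k : ℤ) (x : G) :
    (f ^ k) x = x + k • c := by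
  induction k using Int.induction_on generalizing x with
  | zero => simp
  | succ k ih =>
    rw [zpow_add_one, Equiv.Perm.mul_apply, ih, hf, add_one_zsmul]
    abel
  | pred k ih =>
    rw [zpow_sub_one, Equiv.Perm.mul_apply,
      Equiv.Perm.inv_eq_iff_eq.mpr (by rw [hf, sub_add_cancel] : x = f (x - c)), ih,
      sub_one_zsmul]
    abel

theorem Equiv.Perm.pow_apply_of_forall_apply_eq_mul {M : Type*} [Monoid M] {f : Equiv.Perm M}
    {c : M} (hf : ∀ x, f x = c * x) (k : ℕ) (x : M) : (f ^ k) x = c ^ k * x := by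
  rw [Equiv.Perm.coe_pow, funext hf, mul_left_iterate]

namespace BS

variable {n : ℕ}

theorem b_mul_a_mul_b_inv : BSb n * BSa n * (BSb n)⁻¹ = BSa n ^ n := by
  have h : PresentedGroup.mk (BSRels n)
      (FreeGroup.of true * FreeGroup.of false * (FreeGroup.of true)⁻¹ *
        (FreeGroup.of false ^ n)⁻¹) = 1 :=
    (QuotientGroup.eq_one_iff _).mpr (Subgroup.subset_normalClosure rfl)
  simp only [map_mul, map_inv, map_pow] at h
  exact mul_inv_eq_one.mp h

theorem b_mul_zpow_a (k : ℤ) : BSb n * BSa n ^ k = BSa n ^ ((n : ℤ) * k) * BSb n := by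
  rw [zpow_mul, zpow_natCast, ← b_mul_a_mul_b_inv, conj_zpow, inv_mul_cancel_right]

theorem pow_b_mul_zpow_a (i : ℕ) (k : ℤ) :
    BSb n ^ i * BSa n ^ k = BSa n ^ ((n : ℤ) ^ i * k) * BSb n ^ i := by
  induction i generalizing k with
  | zero => simp
  | succ i ih =>
    rw [pow_succ', mul_assoc, ih, ← mul_assoc, b_mul_zpow_a, mul_assoc, pow_succ', mul_assoc]

theorem zpow_a_mul_inv_pow_b (i : ℕ) (k : ℤ) :
    BSa n ^ k * (BSb n ^ i)⁻¹ = (BSb n ^ i)⁻¹ * BSa n ^ ((n : ℤ) ^ i * k) := by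
  rw [eq_inv_mul_iff_mul_eq, ← mul_assoc, pow_b_mul_zpow_a, mul_inv_cancel_right]

variable (n) in
def normalForm (i : ℕ) (m : ℤ) (j : ℕ) : BS n := (BSb n ^ i)⁻¹ * BSa n ^ m * BSb n ^ j

theorem zpow_a_mul_normalForm (k : ℤ) (i : ℕ) (m : ℤ) (j : ℕ) :
    BSa n ^ k * normalForm n i m j = normalForm n i ((n : ℤ) ^ i * k + m) j := by
  rw [normalForm, normalForm, ← mul_assoc, ← mul_assoc, zpow_a_mul_inv_pow_b, zpow_add]
  simp only [mul_assoc]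

theorem b_mul_normalForm_zero (m : ℤ) (j : ℕ) :
    BSb n * normalForm n 0 m j = normalForm n 0 (n * m) (j + 1) := by
  rw [normalForm, normalForm, pow_zero, inv_one, one_mul, one_mul, ← mul_assoc, b_mul_zpow_a,
    pow_succ', mul_assoc]

theorem b_mul_normalForm_succ (i : ℕ) (m : ℤ) (j : ℕ) :
    BSb n * normalForm n (i + 1) m j = normalForm n i m j := by
  rw [normalForm, normalForm, pow_succ, mul_inv_rev]
  group

theorem inv_b_mul_normalForm (i : ℕ) (m : ℤ) (j : ℕ) :
    (BSb n)⁻¹ * normalForm n i m j = normalForm n (i + 1) m j := by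
  rw [normalForm, normalForm, pow_succ, mul_inv_rev]
  simp only [mul_assoc]

theorem exists_eq_normalForm (g : BS n) : ∃ i m j, g = normalForm n i m j := by
  have hg : g ∈ Subgroup.closure (Set.range PresentedGroup.of) := by
    rw [PresentedGroup.closure_range_of]; trivial
  induction hg using Subgroup.closure_induction_left with
  | one => exact ⟨0, 0, 0, by simp [normalForm]⟩
  | mul_left x hx y _ ih =>
    obtain ⟨i, m, j, rfl⟩ := ih
    obtain ⟨_ | _, rfl⟩ := hx
    · exact ⟨i, _, j, by simpa [BSa] using zpow_a_mul_normalForm (n := n) 1 i m j⟩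
    · cases i with
      | zero => exact ⟨_, _, _, b_mul_normalForm_zero m j⟩
      | succ i => exact ⟨_, _, _, b_mul_normalForm_succ i m j⟩
  | inv_mul_cancel x hx y _ ih =>
    obtain ⟨i, m, j, rfl⟩ := ih
    obtain ⟨_ | _, rfl⟩ := hx
    · exact ⟨i, _, j, by simpa [BSa] using zpow_a_mul_normalForm (n := n) (-1) i m j⟩
    · exact ⟨_, _, _, inv_b_mul_normalForm i m j⟩

variable {ρ : BS n →* Equiv.Perm ℝ}

theorem pow_mul_apply_normalForm (ha : ∀ x, ρ (BSa n) x = x + 1)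
    (hb : ∀ x, ρ (BSb n) x = n * x) (i : ℕ) (m : ℤ) (j : ℕ) (x : ℝ) :
    (n : ℝ) ^ i * ρ (normalForm n i m j) x = n ^ j * x + m := by
  rw [normalForm, map_mul, map_mul, map_inv, map_pow, map_zpow, map_pow, Equiv.Perm.mul_apply,
    Equiv.Perm.mul_apply, ← Equiv.Perm.pow_apply_of_forall_apply_eq_mul hb,
    Equiv.Perm.coe_inv, Equiv.apply_symm_apply, Equiv.Perm.zpow_apply_of_forall_apply_eq_add ha,
    Equiv.Perm.pow_apply_of_forall_apply_eq_mul hb, zsmul_one]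

theorem strictMono_apply (hn : n ≠ 0) (ha : ∀ x, ρ (BSa n) x = x + 1)
    (hb : ∀ x, ρ (BSb n) x = n * x) (g : BS n) : StrictMono (ρ g) := by
  obtain ⟨i, m, j, rfl⟩ := exists_eq_normalForm g
  intro x y hxy
  have hni : (0 : ℝ) < n ^ i := by positivity
  have hnj : (0 : ℝ) < n ^ j := by positivity
  refine lt_of_mul_lt_mul_left ?_ hni.le
  rw [pow_mul_apply_normalForm ha hb, pow_mul_apply_normalForm ha hb]
  gcongr

theorem eq_one_of_apply_eq_self (hn : 1 < n) (ha : ∀ x, ρ (BSa n) x = x + 1)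
    (hb : ∀ x, ρ (BSb n) x = n * x) {α : ℝ} (hα : Irrational α) (g : BS n)
    (hg : ρ g α = α) : g = 1 := by
  obtain ⟨i, m, j, rfl⟩ := exists_eq_normalForm g
  have key := pow_mul_apply_normalForm ha hb i m j α
  rw [hg] at key
  have hm : (((n : ℤ) ^ i - n ^ j : ℤ) : ℝ) * α = m := by push_cast; linarith
  obtain hij | hij := eq_or_ne ((n : ℤ) ^ i - n ^ j) 0
  · obtain rfl : i = j := Nat.pow_right_injective hn (by exact_mod_cast sub_eq_zero.mp hij)
    obtain rfl : m = 0 := by exact_mod_cast (by simpa [hij] using hm : (0 : ℝ) = m).symm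
    simp [normalForm]
  · exact absurd hm ((hα.intCast_mul hij).ne_int m)

end BS

/-- For `n ≥ 2` and irrational `α`, the Smirnov set
`P_α = {g ∈ BS(1,n) : ρ(g)(α) > α}` is a positive cone of `BS(1,n)`. -/
theorem smirnov_positive_cone (n : ℕ) (hn : 2 ≤ n) (A B : Equiv.Perm ℝ)
    (hA : ∀ x, A x = x + 1) (hB : ∀ x, B x = n * x)
    (ρ : BS n →* Equiv.Perm ℝ) (hρa : ρ (BSa n) = A) (hρb : ρ (BSb n) = B)
    (α : ℝ) (hα : Irrational α) :
    IsPositiveCone {g : BS n | α < ρ g α} := by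
  have ha : ∀ x, ρ (BSa n) x = x + 1 := hρa ▸ hA
  have hb : ∀ x, ρ (BSb n) x = n * x := hρb ▸ hB
  exact isPositiveCone_setOf_lt_apply ρ (BS.strictMono_apply (by omega) ha hb)
    (BS.eq_one_of_apply_eq_self hn ha hb hα)
end

section
/- For n ≥ 2, if α < β are irrational real numbers, then there exists g ∈ BS(1,n) such that ρ(g)(α) < α and ρ(g)(β) > β; consequently the map α ↦ P_α = {g : ρ(g)(α) > α} from irrationals to positive cones of BS(1,n) is injective. -/
/-!
The element `b⁻ᵗ a⁻ˢ bᵗ⁺¹` acts on `ℝ` as `x ↦ n x - s / nᵗ`, the dilation by `n` about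
`p = s / (nᵗ (n - 1))`. It pushes every point below `p` further down and every point above `p`
further up, so it suffices to find such a `p` strictly between `α` and `β`: take `nᵗ (n - 1)`
larger than `1 / (β - α)` and `s` the ceiling of `nᵗ (n - 1) α`, which is not an integer because
`α` is irrational. Applying this to `α < β` or to `β < α` separates `P_α` from `P_β`.
-/

namespace Equiv.Perm

theorem zpow_apply_eq_add_zsmul {G : Type*} [AddGroup G] {A : Perm G} {c : G}
    (hA : ∀ x, A x = x + c) (k : ℤ) (x : G) : (A ^ k) x = x + k • c := by
  rw [show A = Equiv.addRight c from Equiv.ext hA, Equiv.zsmul_addRight]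
  rfl

theorem zpow_apply_eq_zpow_mul {K : Type*} [DivisionRing K] {B : Perm K} {c : K} (hc : c ≠ 0)
    (hB : ∀ x, B x = c * x) (k : ℤ) (x : K) : (B ^ k) x = c ^ k * x := by
  rw [show B = MulAction.toPermHom Kˣ K (Units.mk0 c hc) from Equiv.ext hB, ← map_zpow,
    MulAction.toPermHom_apply, MulAction.toPerm_apply, Units.smul_def,
    Units.val_zpow_eq_zpow_val, Units.val_mk0, smul_eq_mul]

end Equiv.Perm

theorem Irrational.lt_ceil_mul_div_lt {α β : ℝ} (hα : Irrational α) {M : ℕ}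
    (h : 1 < M * (β - α)) : α < ⌈α * M⌉ / M ∧ (⌈α * M⌉ : ℝ) / M < β := by
  have hM : M ≠ 0 := by rintro rfl; norm_num at h
  have hM' : (0 : ℝ) < M := by positivity
  have hceil : α * M < ⌈α * M⌉ :=
    (Int.le_ceil _).lt_of_ne ((hα.mul_natCast hM).ne_int _)
  constructor
  · rwa [lt_div_iff₀ hM']
  · rw [div_lt_iff₀ hM']
    linarith [Int.ceil_lt_add_one (α * M)]

namespace BS

variable {n : ℕ} {ρ : BS n →* Equiv.Perm ℝ}

theorem exists_apply_eq_add_mul_sub (hn : 2 ≤ n) (hρa : ∀ x, ρ (BSa n) x = x + 1)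
    (hρb : ∀ x, ρ (BSb n) x = n * x) (t : ℕ) (s : ℤ) :
    ∃ g : BS n, ∀ x, ρ g x = s / (n ^ t * (n - 1)) + n * (x - s / (n ^ t * (n - 1))) := by
  have hn0 : (n : ℝ) ≠ 0 := by positivity
  have hn1 : (n : ℝ) - 1 ≠ 0 := sub_ne_zero.mpr (by exact_mod_cast (by omega : n ≠ 1))
  refine ⟨BSb n ^ (-(t : ℤ)) * BSa n ^ (-s) * BSb n ^ ((t : ℤ) + 1), fun x ↦ ?_⟩
  simp only [map_mul, map_zpow, Equiv.Perm.mul_apply, Equiv.Perm.zpow_apply_eq_add_zsmul hρa,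
    Equiv.Perm.zpow_apply_eq_zpow_mul hn0 hρb, zsmul_eq_mul, mul_one]
  rw [zpow_neg, zpow_add_one₀ hn0, zpow_natCast]
  field_simp
  push_cast
  ring

theorem exists_apply_lt_and_lt_apply (hn : 2 ≤ n) (hρa : ∀ x, ρ (BSa n) x = x + 1)
    (hρb : ∀ x, ρ (BSb n) x = n * x) {α β : ℝ} (hα : Irrational α) (hαβ : α < β) :
    ∃ g : BS n, ρ g α < α ∧ β < ρ g β := by
  have hn1 : (1 : ℝ) < n := by exact_mod_cast hn
  obtain ⟨t, ht⟩ := pow_unbounded_of_one_lt (1 / ((n - 1) * (β - α))) hn1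
  set M : ℕ := n ^ t * (n - 1)
  have hM : (M : ℝ) = n ^ t * (n - 1) := by
    rw [Nat.cast_mul, Nat.cast_pow, Nat.cast_sub (by omega), Nat.cast_one]
  have hscale : 1 < (M : ℝ) * (β - α) := by
    rw [div_lt_iff₀ (by nlinarith)] at ht
    rw [hM]; linarith
  obtain ⟨hαp, hpβ⟩ := hα.lt_ceil_mul_div_lt hscale
  obtain ⟨g, hg⟩ := exists_apply_eq_add_mul_sub hn hρa hρb t ⌈α * M⌉
  rw [← hM] at hg
  refine ⟨g, ?_, ?_⟩ <;> rw [hg] <;> nlinarith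

end BS

/-- For `n ≥ 2` and irrationals `α < β` there is `g ∈ BS(1,n)` with
`ρ(g)(α) < α` and `ρ(g)(β) > β`; consequently `α ↦ P_α = {g : ρ(g)(α) > α}` is injective
on irrationals. -/
theorem smirnov_injective (n : ℕ) (hn : 2 ≤ n) (A B : Equiv.Perm ℝ)
    (hA : ∀ x, A x = x + 1) (hB : ∀ x, B x = n * x)
    (ρ : BS n →* Equiv.Perm ℝ) (hρa : ρ (BSa n) = A) (hρb : ρ (BSb n) = B)
    (α β : ℝ) (hα : Irrational α) (hβ : Irrational β) :
    (α < β → ∃ g : BS n, ρ g α < α ∧ β < ρ g β) ∧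
    ({g : BS n | α < ρ g α} = {g : BS n | β < ρ g β} → α = β) := by
  have ha : ∀ x, ρ (BSa n) x = x + 1 := hρa ▸ hA
  have hb : ∀ x, ρ (BSb n) x = n * x := hρb ▸ hB
  refine ⟨BS.exists_apply_lt_and_lt_apply hn ha hb hα, fun hP ↦ ?_⟩
  by_contra hne
  rcases lt_or_gt_of_ne hne with hαβ | hβα
  · obtain ⟨g, hgα, hgβ⟩ := BS.exists_apply_lt_and_lt_apply hn ha hb hα hαβ
    exact lt_asymm ((Set.ext_iff.mp hP g).mpr hgβ) hgα
  · obtain ⟨g, hgβ, hgα⟩ := BS.exists_apply_lt_and_lt_apply hn ha hb hβ hβα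
    exact lt_asymm ((Set.ext_iff.mp hP g).mp hgα) hgβ
end

section
/- Let S ⊂ [0,1] be a finite set and x, y ∈ [0,1] \ S with x ≠ y, x and y not endpoints of [0,1]. Then there exists a piecewise-linear homeomorphism f of [0,1] with dyadic rational breakpoints and slopes that are integer powers of 2 (i.e., an element of Thompson's group F in its standard realization) such that f(s) = s for all s ∈ S, f(x) > x, and f(y) < y. -/
/-- A real number is dyadic rational. -/
def IsDyadic (x : ℝ) : Prop := ∃ (a : ℤ) (k : ℕ), x = (a : ℝ) / 2 ^ k

/-- `f` restricts to an element of Thompson's group `F` in its standard realization: an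
orientation-preserving homeomorphism of `[0,1]` which is piecewise linear with finitely
many breakpoints, all dyadic rational, and all slopes integer powers of `2`. -/
def InThompsonF (f : ℝ → ℝ) : Prop :=
  Set.BijOn f (Set.Icc 0 1) (Set.Icc 0 1) ∧
  StrictMonoOn f (Set.Icc 0 1) ∧
  ContinuousOn f (Set.Icc 0 1) ∧
  f 0 = 0 ∧ f 1 = 1 ∧
  ∃ (m : ℕ) (pts : Fin (m + 1) → ℝ),
    StrictMono pts ∧ pts 0 = 0 ∧ pts (Fin.last m) = 1 ∧ (∀ i, IsDyadic (pts i)) ∧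
    ∀ i : Fin m, ∃ (k : ℤ) (c : ℝ),
      ∀ t ∈ Set.Icc (pts i.castSucc) (pts i.succ), f t = 2 ^ k * t + c

/-!
Around `x` and `y` choose disjoint intervals with dyadic endpoints inside `(0, 1) \ S`. On such
an interval `[a, b]` a three-piece map with slopes `2, 1, 1/2` pushes every interior point up and
fixes everything outside; its breakpoints are obtained from `a` and `b` by taking midpoints, so
they are dyadic. Composing such a bump around `x` with the analogous downward bump around `y`
gives the required element of `F`.
-/

open Set

namespace IsDyadic

lemma zero : IsDyadic 0 := ⟨0, 0, by norm_num⟩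

lemma one : IsDyadic 1 := ⟨1, 0, by norm_num⟩

lemma midpoint {x y : ℝ} (hx : IsDyadic x) (hy : IsDyadic y) : IsDyadic ((x + y) / 2) := by
  obtain ⟨a, k, rfl⟩ := hx
  obtain ⟨b, l, rfl⟩ := hy
  refine ⟨a * 2 ^ l + b * 2 ^ k, k + l + 1, ?_⟩
  push_cast
  field_simp
  ring

end IsDyadic

lemma exists_isDyadic_btwn {u v : ℝ} (h : u < v) : ∃ q, IsDyadic q ∧ u < q ∧ q < v := by
  obtain ⟨k, hk⟩ := exists_pow_lt_of_lt_one (sub_pos.2 h) (one_half_lt_one (α := ℝ))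
  have h2k : (0 : ℝ) < 2 ^ k := by positivity
  rw [div_pow, one_pow, div_lt_iff₀ h2k] at hk
  refine ⟨(⌊u * 2 ^ k⌋ + 1 : ℤ) / 2 ^ k, ⟨_, k, rfl⟩, ?_, ?_⟩
  · rw [lt_div_iff₀ h2k]
    push_cast
    exact Int.lt_floor_add_one _
  · rw [div_lt_iff₀ h2k]
    push_cast
    linarith [Int.floor_le (u * 2 ^ k)]

lemma exists_isDyadic_Icc_subset {U : Set ℝ} (hU : IsOpen U) {x : ℝ} (hx : x ∈ U) :
    ∃ a b, IsDyadic a ∧ IsDyadic b ∧ x ∈ Ioo a b ∧ Icc a b ⊆ U := by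
  obtain ⟨ε, hε, hball⟩ := Metric.isOpen_iff.1 hU x hx
  obtain ⟨a, ha, hxa, hax⟩ := exists_isDyadic_btwn (sub_lt_self x hε)
  obtain ⟨b, hb, hxb, hbx⟩ := exists_isDyadic_btwn (lt_add_of_pos_right x hε)
  refine ⟨a, b, ha, hb, ⟨hax, hxb⟩, fun t ht => hball ?_⟩
  rw [Metric.mem_ball, Real.dist_eq, abs_lt]
  constructor <;> linarith [ht.1, ht.2]

/-- A partition of `[p, q]` into intervals with dyadic endpoints, listed from the left, on each
of which `f` is affine with slope a power of `2`. -/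
inductive DyadicPiecewiseAffine (f : ℝ → ℝ) : ℝ → ℝ → Prop
  | nil {p : ℝ} : IsDyadic p → DyadicPiecewiseAffine f p p
  | cons {p q r : ℝ} (k : ℤ) (c : ℝ) : IsDyadic p → p < q →
      (∀ t ∈ Icc p q, f t = 2 ^ k * t + c) → DyadicPiecewiseAffine f q r →
      DyadicPiecewiseAffine f p r

namespace DyadicPiecewiseAffine

variable {f g : ℝ → ℝ} {p q r : ℝ}

lemma le (h : DyadicPiecewiseAffine f p q) : p ≤ q := by
  induction h with
  | nil => exact le_rfl
  | cons _ _ _ hpq _ _ ih => exact hpq.le.trans ih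

lemma isDyadic_left (h : DyadicPiecewiseAffine f p q) : IsDyadic p := by
  cases h <;> assumption

lemma isDyadic_right (h : DyadicPiecewiseAffine f p q) : IsDyadic q := by
  induction h with
  | nil hp => exact hp
  | cons _ _ _ _ _ _ ih => exact ih

lemma trans (h₁ : DyadicPiecewiseAffine f p q) (h₂ : DyadicPiecewiseAffine f q r) :
    DyadicPiecewiseAffine f p r := by
  induction h₁ with
  | nil => exact h₂
  | cons k c hp hpq hf _ ih => exact cons k c hp hpq hf (ih h₂)

lemma congr (h : DyadicPiecewiseAffine g p q) (hfg : EqOn f g (Icc p q)) :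
    DyadicPiecewiseAffine f p q := by
  induction h with
  | nil hp => exact nil hp
  | cons k c hp hpq hg hqr ih =>
    refine cons k c hp hpq (fun t ht => ?_) (ih (hfg.mono (Icc_subset_Icc_left hpq.le)))
    rw [hfg (Icc_subset_Icc_right hqr.le ht), hg t ht]

lemma of_eqOn_id (hp : IsDyadic p) (hq : IsDyadic q) (hpq : p ≤ q) (hf : EqOn f id (Icc p q)) :
    DyadicPiecewiseAffine f p q := by
  rcases hpq.eq_or_lt with rfl | hpq
  · exact nil hp
  · exact cons 0 0 hp hpq (fun t ht => by simp [hf ht]) (nil hq)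

lemma exists_breakpoints (h : DyadicPiecewiseAffine f p q) :
    ∃ (m : ℕ) (pts : Fin (m + 1) → ℝ),
      StrictMono pts ∧ pts 0 = p ∧ pts (Fin.last m) = q ∧ (∀ i, IsDyadic (pts i)) ∧
      ∀ i : Fin m, ∃ (k : ℤ) (c : ℝ),
        ∀ t ∈ Icc (pts i.castSucc) (pts i.succ), f t = 2 ^ k * t + c := by
  induction h with
  | nil hp =>
    exact ⟨0, fun _ => _, Fin.strictMono_iff_lt_succ.2 nofun, rfl, rfl, fun _ => hp, nofun⟩
  | @cons p q r k c hp hpq hf _ ih =>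
    obtain ⟨m, pts, hmono, h0, hlast, hdyad, hpieces⟩ := ih
    refine ⟨m + 1, Fin.cons p pts, ?_, rfl, by rw [← Fin.succ_last, Fin.cons_succ, hlast],
      Fin.cases hp hdyad, Fin.cases ⟨k, c, ?_⟩ fun i => ?_⟩
    · refine Fin.strictMono_cons.2 ⟨fun j => ?_, hmono⟩
      exact hpq.trans_le (h0 ▸ hmono.monotone j.zero_le)
    · simpa [h0] using hf
    · simpa using hpieces i

end DyadicPiecewiseAffine

lemma inThompsonF_of_strictMono {f : ℝ → ℝ} (hmono : StrictMono f) (hcont : Continuous f)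
    (h0 : f 0 = 0) (h1 : f 1 = 1) (hpl : DyadicPiecewiseAffine f 0 1) : InThompsonF f := by
  have hmaps : MapsTo f (Icc 0 1) (Icc 0 1) := fun t ht =>
    ⟨h0 ▸ hmono.monotone ht.1, h1 ▸ hmono.monotone ht.2⟩
  have hsurj : SurjOn f (Icc 0 1) (Icc 0 1) := by
    have := intermediate_value_Icc (zero_le_one' ℝ) hcont.continuousOn
    rwa [h0, h1] at this
  exact ⟨⟨hmaps, hmono.injective.injOn, hsurj⟩, hmono.strictMonoOn _, hcont.continuousOn,
    h0, h1, by simpa using hpl.exists_breakpoints⟩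

structure IsDyadicBump (f : ℝ → ℝ) (a b : ℝ) : Prop where
  strictMono : StrictMono f
  continuous : Continuous f
  apply_eq_self : ∀ t ∉ Ioo a b, f t = t
  piecewiseAffine : DyadicPiecewiseAffine f a b

namespace IsDyadicBump

variable {f g h : ℝ → ℝ} {a b c d : ℝ}

lemma mapsTo (hf : IsDyadicBump f a b) : MapsTo f (Icc a b) (Icc a b) := fun t ht =>
  ⟨hf.apply_eq_self a (by simp) ▸ hf.strictMono.monotone ht.1,
    hf.apply_eq_self b (by simp) ▸ hf.strictMono.monotone ht.2⟩

lemma comp_eqOn_left (hg : IsDyadicBump g c d) (hh : IsDyadicBump h a b) (hbc : b ≤ c) :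
    EqOn (g ∘ h) h (Icc a b) := fun t ht =>
  hg.apply_eq_self _ fun hmem => by linarith [(hh.mapsTo ht).2, hmem.1]

lemma comp_eqOn_right (hh : IsDyadicBump h a b) (hbc : b ≤ c) :
    EqOn (g ∘ h) g (Icc c d) := fun t ht =>
  congrArg g (hh.apply_eq_self t fun hmem => by linarith [ht.1, hmem.2])

lemma comp (hg : IsDyadicBump g c d) (hh : IsDyadicBump h a b) (hbc : b ≤ c) :
    IsDyadicBump (g ∘ h) a d where
  strictMono := hg.strictMono.comp hh.strictMono
  continuous := hg.continuous.comp hh.continuous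
  apply_eq_self t ht := by
    have hab := hh.piecewiseAffine.le
    have hcd := hg.piecewiseAffine.le
    rw [Function.comp_apply, hh.apply_eq_self t fun hmem => ht ⟨hmem.1, by linarith [hmem.2]⟩,
      hg.apply_eq_self t fun hmem => ht ⟨by linarith [hmem.1], hmem.2⟩]
  piecewiseAffine :=
    (hh.piecewiseAffine.congr (hg.comp_eqOn_left hh hbc)).trans <|
      (DyadicPiecewiseAffine.of_eqOn_id hh.piecewiseAffine.isDyadic_right
        hg.piecewiseAffine.isDyadic_left hbc fun t ht => by
          simp [hh.apply_eq_self t fun hmem => by linarith [ht.1, hmem.2],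
            hg.apply_eq_self t fun hmem => by linarith [ht.2, hmem.1]]).trans <|
      hg.piecewiseAffine.congr (hh.comp_eqOn_right hbc)

lemma inThompsonF (hf : IsDyadicBump f a b) (h0a : 0 ≤ a) (hb1 : b ≤ 1) : InThompsonF f := by
  have hid : ∀ t, t ≤ a ∨ b ≤ t → f t = t := fun t ht =>
    hf.apply_eq_self t fun hmem => by rcases ht with ht | ht <;> linarith [hmem.1, hmem.2]
  refine inThompsonF_of_strictMono hf.strictMono hf.continuous (hid 0 (.inl h0a))
    (hid 1 (.inr hb1)) ?_
  exact (DyadicPiecewiseAffine.of_eqOn_id .zero hf.piecewiseAffine.isDyadic_left h0a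
    fun t ht => hid t (.inl ht.2)).trans <| hf.piecewiseAffine.trans <|
    DyadicPiecewiseAffine.of_eqOn_id hf.piecewiseAffine.isDyadic_right .one hb1
    fun t ht => hid t (.inr ht.1)

lemma inThompsonF_comp {S : Set ℝ} (hg : IsDyadicBump g c d) (hh : IsDyadicBump h a b)
    (hbc : b ≤ c) (hab : Icc a b ⊆ Ioo 0 1 \ S) (hcd : Icc c d ⊆ Ioo 0 1 \ S) :
    InThompsonF (g ∘ h) ∧ EqOn (g ∘ h) id S := by
  have hfix : ∀ {p q}, Icc p q ⊆ Ioo 0 1 \ S → ∀ s ∈ S, s ∉ Ioo p q :=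
    fun hpq s hs hspq => (hpq (Ioo_subset_Icc_self hspq)).2 hs
  refine ⟨(hg.comp hh hbc).inThompsonF ?_ ?_, fun s hs => ?_⟩
  · exact (hab (left_mem_Icc.2 hh.piecewiseAffine.le)).1.1.le
  · exact (hcd (right_mem_Icc.2 hg.piecewiseAffine.le)).1.2.le
  · rw [Function.comp_apply, hh.apply_eq_self s (hfix hab s hs),
      hg.apply_eq_self s (hfix hcd s hs), id]

end IsDyadicBump

/-- Slopes `2, 1, 1/2` on `[a, (3a+b)/4]`, `[(3a+b)/4, (a+b)/2]`, `[(a+b)/2, b]`. -/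
noncomputable def bumpUp (a b t : ℝ) : ℝ :=
  max t (min (2 * t - a) (min (t + (b - a) / 4) ((t + b) / 2)))

/-- Slopes `1/2, 1, 2` on `[a, (a+b)/2]`, `[(a+b)/2, (a+3b)/4]`, `[(a+3b)/4, b]`. -/
noncomputable def bumpDown (a b t : ℝ) : ℝ :=
  min t (max (2 * t - b) (max (t - (b - a) / 4) ((t + a) / 2)))

section Bumps

variable {a b t : ℝ}

lemma lt_bumpUp (ht : t ∈ Ioo a b) : t < bumpUp a b t := by
  obtain ⟨hat, htb⟩ := ht
  exact lt_max_of_lt_right (lt_min (by linarith) (lt_min (by linarith) (by linarith)))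

lemma bumpDown_lt (ht : t ∈ Ioo a b) : bumpDown a b t < t := by
  obtain ⟨hat, htb⟩ := ht
  exact min_lt_of_right_lt (max_lt (by linarith) (max_lt (by linarith) (by linarith)))

lemma isDyadicBump_bumpUp (ha : IsDyadic a) (hb : IsDyadic b) (hab : a < b) :
    IsDyadicBump (bumpUp a b) a b where
  strictMono _ _ h :=
    max_lt_max h (min_lt_min (by linarith) (min_lt_min (by linarith) (by linarith)))
  continuous := by unfold bumpUp; fun_prop
  apply_eq_self t ht := by
    simp only [mem_Ioo, not_and_or, not_lt] at ht
    simp only [bumpUp, max_def, min_def]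
    split_ifs <;> rcases ht with ht | ht <;> linarith
  piecewiseAffine := by
    have hm := ha.midpoint hb
    refine .cons 1 (-a) ha (by linarith) (fun t ht => ?_) <|
      .cons 0 ((b - a) / 4) (ha.midpoint hm) (by linarith) (fun t ht => ?_) <|
      .cons (-1) (b / 2) hm (by linarith) (fun t ht => ?_) (.nil hb) <;>
    · obtain ⟨h₁, h₂⟩ := ht
      simp only [bumpUp, max_def, min_def]
      split_ifs <;> norm_num <;> linarith

lemma isDyadicBump_bumpDown (ha : IsDyadic a) (hb : IsDyadic b) (hab : a < b) :
    IsDyadicBump (bumpDown a b) a b where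
  strictMono _ _ h :=
    min_lt_min h (max_lt_max (by linarith) (max_lt_max (by linarith) (by linarith)))
  continuous := by unfold bumpDown; fun_prop
  apply_eq_self t ht := by
    simp only [mem_Ioo, not_and_or, not_lt] at ht
    simp only [bumpDown, max_def, min_def]
    split_ifs <;> rcases ht with ht | ht <;> linarith
  piecewiseAffine := by
    have hm := ha.midpoint hb
    refine .cons (-1) (a / 2) ha (by linarith) (fun t ht => ?_) <|
      .cons 0 (-((b - a) / 4)) hm (by linarith) (fun t ht => ?_) <|
      .cons 1 (-b) (hm.midpoint hb) (by linarith) (fun t ht => ?_) (.nil hb) <;>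
    · obtain ⟨h₁, h₂⟩ := ht
      simp only [bumpDown, max_def, min_def]
      split_ifs <;> norm_num <;> linarith

end Bumps

lemma exists_isDyadic_Icc_separating {U : Set ℝ} (hU : IsOpen U) {x y : ℝ} (hx : x ∈ U)
    (hy : y ∈ U) (hxy : x < y) :
    ∃ a b c d, IsDyadic a ∧ IsDyadic b ∧ IsDyadic c ∧ IsDyadic d ∧
      x ∈ Ioo a b ∧ y ∈ Ioo c d ∧ b < c ∧ Icc a b ⊆ U ∧ Icc c d ⊆ U := by
  obtain ⟨a, b, ha, hb, hxab, habU⟩ := exists_isDyadic_Icc_subset (hU.inter isOpen_Iio)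
    ⟨hx, show x < (x + y) / 2 by linarith⟩
  obtain ⟨c, d, hc, hd, hycd, hcdU⟩ := exists_isDyadic_Icc_subset (hU.inter isOpen_Ioi)
    ⟨hy, show (x + y) / 2 < y by linarith⟩
  have hbm : b < (x + y) / 2 := (habU (right_mem_Icc.2 (hxab.1.trans hxab.2).le)).2
  have hmc : (x + y) / 2 < c := (hcdU (left_mem_Icc.2 (hycd.1.trans hycd.2).le)).2
  exact ⟨a, b, c, d, ha, hb, hc, hd, hxab, hycd, hbm.trans hmc,
    habU.trans inter_subset_left, hcdU.trans inter_subset_left⟩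

theorem thompson_move_two_points_general (S : Finset ℝ)
    (x y : ℝ) (hx : x ∈ Set.Ioo (0 : ℝ) 1) (hy : y ∈ Set.Ioo (0 : ℝ) 1)
    (hxS : x ∉ S) (hyS : y ∉ S) (hxy : x ≠ y) :
    ∃ f : ℝ → ℝ, InThompsonF f ∧ (∀ s ∈ S, f s = s) ∧ x < f x ∧ f y < y := by
  have hU : IsOpen (Ioo 0 1 \ (S : Set ℝ)) := isOpen_Ioo.sdiff S.isClosed
  rcases hxy.lt_or_gt with hlt | hlt
  · obtain ⟨a, b, c, d, ha, hb, hc, hd, hxab, hycd, hbc, habU, hcdU⟩ :=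
      exists_isDyadic_Icc_separating hU ⟨hx, hxS⟩ ⟨hy, hyS⟩ hlt
    have hup := isDyadicBump_bumpUp ha hb (hxab.1.trans hxab.2)
    have hdown := isDyadicBump_bumpDown hc hd (hycd.1.trans hycd.2)
    obtain ⟨hF, hfix⟩ := hdown.inThompsonF_comp hup hbc.le habU hcdU
    refine ⟨_, hF, fun s hs => hfix hs, ?_, ?_⟩
    · rw [hdown.comp_eqOn_left hup hbc.le (Ioo_subset_Icc_self hxab)]
      exact lt_bumpUp hxab
    · rw [hup.comp_eqOn_right hbc.le (Ioo_subset_Icc_self hycd)]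
      exact bumpDown_lt hycd
  · obtain ⟨a, b, c, d, ha, hb, hc, hd, hyab, hxcd, hbc, habU, hcdU⟩ :=
      exists_isDyadic_Icc_separating hU ⟨hy, hyS⟩ ⟨hx, hxS⟩ hlt
    have hdown := isDyadicBump_bumpDown ha hb (hyab.1.trans hyab.2)
    have hup := isDyadicBump_bumpUp hc hd (hxcd.1.trans hxcd.2)
    obtain ⟨hF, hfix⟩ := hup.inThompsonF_comp hdown hbc.le habU hcdU
    refine ⟨_, hF, fun s hs => hfix hs, ?_, ?_⟩
    · rw [hdown.comp_eqOn_right hbc.le (Ioo_subset_Icc_self hxcd)]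
      exact lt_bumpUp hxcd
    · rw [hup.comp_eqOn_left hdown hbc.le (Ioo_subset_Icc_self hyab)]
      exact bumpDown_lt hyab

/-- Given a finite `S ⊆ [0,1]` and distinct `x, y ∈ (0,1)` outside `S`,
there is an element of Thompson's group `F` fixing `S` pointwise, moving `x` up and `y`
down. -/
theorem thompson_move_two_points (S : Finset ℝ) (hS : ↑S ⊆ Set.Icc (0 : ℝ) 1)
    (x y : ℝ) (hx : x ∈ Set.Ioo (0 : ℝ) 1) (hy : y ∈ Set.Ioo (0 : ℝ) 1)
    (hxS : x ∉ S) (hyS : y ∉ S) (hxy : x ≠ y) :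
    ∃ f : ℝ → ℝ, InThompsonF f ∧ (∀ s ∈ S, f s = s) ∧ x < f x ∧ f y < y :=
  thompson_move_two_points_general S x y hx hy hxS hyS hxy
end

section
/- Let G be a subgroup of the group of order-preserving bijections of a linearly ordered set (Ω, <), and let e : ℕ → Ω be an injection whose image meets the support {ω : g(ω) ≠ ω} of every non-identity g ∈ G. Then P_e = {g ∈ G : g(e(i)) > e(i), where i is least with g(e(i)) ≠ e(i)} is a positive cone of G. -/
/-!
Order `G` lexicographically by the values `g (e 0), g (e 1), …`: since the `e i` meet every
support, a non-identity `g` has a first index `i` where it moves `e i`, and `g` is positive when it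
moves `e i` up. Because `g` is order-preserving, `g⁻¹` has the same first moving index and moves
`e i` down, which gives the trichotomy; for a product `a * b` the first moving index is the smaller
of those of `a` and `b`, where `a` (monotone) keeps the upward move of `b`.
-/

namespace Equiv.Perm

def FirstMoveIsUp {Ω : Type*} [LT Ω] (e : ℕ → Ω) (f : Perm Ω) : Prop :=
  ∃ i, (∀ j < i, f (e j) = e j) ∧ e i < f (e i)

variable {Ω : Type*} {e : ℕ → Ω} {f g : Perm Ω}

theorem firstMovedIndex_unique {i j : ℕ} (hi : ∀ k < i, f (e k) = e k) (hfi : f (e i) ≠ e i)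
    (hj : ∀ k < j, f (e k) = e k) (hfj : f (e j) ≠ e j) : i = j := by
  by_contra hne
  rcases lt_or_gt_of_ne hne with h | h
  · exact hfi (hj i h)
  · exact hfj (hi j h)

variable [LinearOrder Ω]

theorem firstMoveIsUp_inv_iff (hf : Monotone f) :
    FirstMoveIsUp e f⁻¹ ↔ ∃ i, (∀ j < i, f (e j) = e j) ∧ f (e i) < e i := by
  have hsm : StrictMono f := hf.strictMono_of_injective f.injective
  have hlt (x : Ω) : x < f⁻¹ x ↔ f x < x := by
    rw [← hsm.lt_iff_lt, ← mul_apply, mul_inv_cancel, one_apply]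
  simp only [FirstMoveIsUp, inv_eq_iff_eq, hlt, eq_comm (a := e _)]

theorem not_firstMoveIsUp_one : ¬FirstMoveIsUp e 1 := by
  rintro ⟨i, -, hi⟩
  exact hi.ne rfl

theorem firstMoveIsUp_or_inv (hf : Monotone f) (hmove : ∃ i, f (e i) ≠ e i) :
    FirstMoveIsUp e f ∨ FirstMoveIsUp e f⁻¹ := by
  classical
  have hfix : ∀ j < Nat.find hmove, f (e j) = e j := fun j hj =>
    not_not.mp (Nat.find_min hmove hj)
  rw [firstMoveIsUp_inv_iff hf]
  rcases lt_or_gt_of_ne (Nat.find_spec hmove) with hdown | hup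
  · exact .inr ⟨_, hfix, hdown⟩
  · exact .inl ⟨_, hfix, hup⟩

theorem not_firstMoveIsUp_and_inv (hf : Monotone f) :
    ¬(FirstMoveIsUp e f ∧ FirstMoveIsUp e f⁻¹) := by
  rw [firstMoveIsUp_inv_iff hf]
  rintro ⟨⟨i, hi, hup⟩, ⟨j, hj, hdown⟩⟩
  obtain rfl := firstMovedIndex_unique hi hup.ne' hj hdown.ne
  exact lt_asymm hup hdown

theorem FirstMoveIsUp.mul (hf : Monotone f) (hfe : FirstMoveIsUp e f) (hge : FirstMoveIsUp e g) :
    FirstMoveIsUp e (f * g) := by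
  obtain ⟨i, hfi, hupf⟩ := hfe
  obtain ⟨j, hgj, hupg⟩ := hge
  have hsm : StrictMono f := hf.strictMono_of_injective f.injective
  refine ⟨min i j, fun k hk => ?_, ?_⟩
  · rw [mul_apply, hgj k (hk.trans_le (min_le_right i j)),
      hfi k (hk.trans_le (min_le_left i j))]
  · rw [mul_apply]
    rcases lt_trichotomy i j with h | rfl | h
    · rwa [min_eq_left h.le, hgj i h]
    · rw [min_self]
      exact hupf.trans (hsm hupg)
    · rw [min_eq_right h.le]
      calc e j = f (e j) := (hfi j h).symm
        _ < f (g (e j)) := hsm hupg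

end Equiv.Perm

open Equiv.Perm in
theorem first_difference_positive_cone_general {Ω : Type*} [LinearOrder Ω]
    (G : Subgroup (Equiv.Perm Ω)) (hmono : ∀ g ∈ G, Monotone ⇑g)
    (e : ℕ → Ω)
    (hsupp : ∀ g ∈ G, g ≠ 1 → ∃ i, g (e i) ≠ e i) :
    IsPositiveCone
      {g : G | ∃ i, (∀ j, j < i → (g : Equiv.Perm Ω) (e j) = e j) ∧
        e i < (g : Equiv.Perm Ω) (e i)} := by
  change IsPositiveCone {g : G | FirstMoveIsUp e g}
  have hmono' (g : G) : Monotone ⇑(g : Equiv.Perm Ω) := hmono g g.2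
  refine ⟨fun a ha b hb => ha.mul (hmono' a) hb, ?_, ?_⟩
  · ext g
    simp only [Set.mem_union, Set.mem_inv, Set.mem_ofPred_eq, Set.mem_compl_iff,
      Set.mem_singleton_iff, InvMemClass.coe_inv]
    constructor
    · rintro (h | h) rfl <;> exact not_firstMoveIsUp_one (by simpa using h)
    · intro hg
      exact firstMoveIsUp_or_inv (hmono' g) (hsupp g g.2 (by simpa using hg))
  · refine Set.disjoint_left.2 fun g hpos hneg =>
      not_firstMoveIsUp_and_inv (hmono' g) ⟨hpos, ?_⟩
    simpa using hneg

/-- Let `G` be a subgroup of the order-preserving bijections of a linearly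
ordered set `Ω`, and `e : ℕ → Ω` an injection whose image meets the support of every
non-identity element of `G`.  Then `P_e = {g : g(e i) > e i at the least i with
g(e i) ≠ e i}` is a positive cone of `G`. -/
theorem first_difference_positive_cone {Ω : Type*} [LinearOrder Ω]
    (G : Subgroup (Equiv.Perm Ω)) (hmono : ∀ g ∈ G, Monotone ⇑g)
    (e : ℕ → Ω) (he : Function.Injective e)
    (hsupp : ∀ g ∈ G, g ≠ 1 → ∃ i, g (e i) ≠ e i) :
    IsPositiveCone
      {g : G | ∃ i, (∀ j, j < i → (g : Equiv.Perm Ω) (e j) = e j) ∧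
        e i < (g : Equiv.Perm Ω) (e i)} :=
  first_difference_positive_cone_general G hmono e hsupp
end
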